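/- Let G be a finite group, C a cyclic normal subgroup, and M a homogeneous G-lattice. If H²(C, M) ≠ 0, then C acts trivially on ℚ ⊗ M; in particular, if M is a faithful G-module then C is trivial. -/

import Mathlib

open scoped TensorProduct

/-- Extension of scalars of an integral representation. -/
noncomputable def extScalars (A : Type*) [CommRing A] {G M : Type*} [Group G]
    [AddCommGroup M] [Module ℤ M] (ρ : Representation ℤ G M) :
    Representation A G (A ⊗[ℤ] M) :=
  (Module.End.baseChangeHom ℤ A M).toMonoidHom.comp ρ

/-- A `G`-stable submodule of a representation. -/
def StableSub {k G V : Type*} [CommRing k] [Group G] [AddCommGroup V] [Module k V]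
    (σ : Representation k G V) (W : Submodule k V) : Prop :=
  ∀ (g : G) (x : V), x ∈ W → σ g x ∈ W

/-- `W` is an irreducible subrepresentation. -/
def IsSimpleSub {k G V : Type*} [CommRing k] [Group G] [AddCommGroup V] [Module k V]
    (σ : Representation k G V) (W : Submodule k V) : Prop :=
  W ≠ ⊥ ∧ StableSub σ W ∧ ∀ W' ≤ W, StableSub σ W' → W' = ⊥ ∨ W' = W

/-- `M` is a homogeneous `G`-lattice. -/
def Homogeneous {G M : Type*} [Group G] [AddCommGroup M] [Module ℤ M]
    (ρ : Representation ℤ G M) : Prop :=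
  ∀ (W₁ W₂ : Submodule ℚ (ℚ ⊗[ℤ] M))
    (h₁ : IsSimpleSub (extScalars ℚ ρ) W₁) (_h₂ : IsSimpleSub (extScalars ℚ ρ) W₂),
    ∃ e : W₁ ≃ₗ[ℚ] W₂, ∀ (g : G) (x : ℚ ⊗[ℤ] M) (hx : x ∈ W₁),
      (e ⟨extScalars ℚ ρ g x, h₁.2.1 g x hx⟩ : ℚ ⊗[ℤ] M) =
        extScalars ℚ ρ g (e ⟨x, hx⟩ : W₂)

/-! Since `C` is normal, the `C`-invariants of `V = ℚ ⊗ M` form a `G`-subrepresentation. For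
cyclic `C`, `H²(C, M) = M^C / N(M)`, so `M^C ≠ 0` and, as `M` embeds in `V`, the invariants
contain an irreducible `W₀`. By homogeneity every irreducible subrepresentation of `V` is
`G`-isomorphic to `W₀`, hence also fixed by `C`; as `V` is semisimple (Maschke), `C` fixes all
of `V`, and then all of `M`. -/

open CategoryTheory

theorem eq_top_of_forall_isAtom_le {α : Type*} [Lattice α] [BoundedOrder α]
    [ComplementedLattice α] [IsAtomic α] {x : α} (h : ∀ a, IsAtom a → a ≤ x) :
    x = ⊤ := by
  obtain ⟨y, hxy⟩ := exists_isCompl x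
  obtain rfl | ⟨a, ha, hay⟩ := eq_bot_or_exists_atom_le y
  · exact eq_top_of_isCompl_bot hxy
  · exact (ha.ne_bot (le_bot_iff.1 (hxy.disjoint (h a ha) hay))).elim

universe u

/-- For `G` cyclic, `H²(G, A) = A^G / N(A)`. -/
theorem groupCohomology.subsingleton_H2_of_invariants_eq_bot {k G : Type u} [CommRing k]
    [Group G] [Finite G] [IsCyclic G] (A : Rep k G) (h : A.ρ.invariants = ⊥) :
    Subsingleton (H2 A) := by
  let := IsCyclic.commGroup (α := G)
  cases nonempty_fintype G
  obtain ⟨g, hg⟩ := IsCyclic.exists_generator (α := G)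
  have hker : LinearMap.ker (Rep.applyAsHom A g - 𝟙 A).hom.toLinearMap = ⊥ := by
    rw [← h]
    ext x
    rw [Representation.mem_invariants_iff_of_forall_mem_zpowers A.ρ g hg]
    simp [Rep.sub_hom, sub_eq_zero]
  have := Submodule.subsingleton_iff_eq_bot.2 hker
  refine Function.Surjective.subsingleton ((ModuleCat.epi_iff_surjective
    (Rep.FiniteCyclicGroup.groupCohomologyπEven A g hg 2 even_two)).1 ?_)
  have h1 : Epi (Rep.FiniteCyclicGroup.normHomCompSub A g).moduleCatCyclesIso.inv := inferInstance
  have h2 : Epi (Rep.FiniteCyclicGroup.normHomCompSub A g).homologyπ := inferInstance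
  have h3 : Epi (Rep.FiniteCyclicGroup.groupCohomologyIsoEven A g hg 2 even_two).inv :=
    inferInstance
  exact epi_comp' h1 (epi_comp' h2 h3)

namespace Subrepresentation

variable {k G V : Type*} [CommRing k] [Group G] [AddCommGroup V] [Module k V]
  (σ : Representation k G V)

noncomputable def invariants (N : Subgroup G) [N.Normal] : Subrepresentation σ :=
  ⟨Representation.invariants (σ.comp N.subtype), σ.le_comap_invariants N⟩

theorem mem_invariants (N : Subgroup G) [N.Normal] (x : V) :
    x ∈ invariants σ N ↔ ∀ n : N, σ n x = x :=
  Iff.rfl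

variable {σ} in
theorem isSimpleSub_of_isAtom {W : Subrepresentation σ} (hW : IsAtom W) :
    IsSimpleSub σ W.toSubmodule := by
  refine ⟨fun h => hW.ne_bot (toSubmodule_injective h), W.apply_mem_toSubmodule,
    fun W' hle hW' => ?_⟩
  rcases hW.le_iff.1 (show (⟨W', hW'⟩ : Subrepresentation σ) ≤ W from hle) with h | h
  · exact .inl (congrArg toSubmodule h)
  · exact .inr (congrArg toSubmodule h)

end Subrepresentation

instance Subrepresentation.instIsAtomic {k G V : Type*} [Field k] [Group G] [Finite G]
    [NeZero (Nat.card G : k)] [AddCommGroup V] [Module k V] {σ : Representation k G V} :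
    IsAtomic (Subrepresentation σ) :=
  Subrepresentation.subrepresentationSubmoduleOrderIso.isAtomic_iff.2 inferInstance

theorem extScalars_tmul {A : Type*} [CommRing A] {G M : Type*} [Group G]
    [AddCommGroup M] [Module ℤ M] (ρ : Representation ℤ G M) (g : G) (a : A) (m : M) :
    extScalars A ρ g (a ⊗ₜ[ℤ] m) = a ⊗ₜ[ℤ] (ρ g m) := by
  simp [extScalars, Module.End.baseChangeHom]
  rfl

theorem one_tmul_injective (M : Type*) [AddCommGroup M] [Module ℤ M] [Module.Flat ℤ M] :
    Function.Injective fun m : M => (1 : ℚ) ⊗ₜ[ℤ] m := by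
  have := Module.Flat.rTensor_preserves_injective_linearMap (M := M) (Algebra.linearMap ℤ ℚ)
    (IsFractionRing.injective ℤ ℚ)
  convert this.comp (TensorProduct.lid ℤ M).symm.injective using 1
  ext m
  simp

theorem eq_one_of_extScalars_eq_one {G M : Type*} [Group G] [AddCommGroup M] [Module ℤ M]
    [Module.Flat ℤ M] (ρ : Representation ℤ G M) {g : G} (h : extScalars ℚ ρ g = 1) :
    ρ g = 1 := by
  ext m
  apply one_tmul_injective M
  simpa [← extScalars_tmul] using LinearMap.congr_fun h (1 ⊗ₜ m)

theorem Homogeneous.apply_eq_self_of_isSimpleSub {G M : Type*} [Group G] [AddCommGroup M]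
    [Module ℤ M] {ρ : Representation ℤ G M} (hρ : Homogeneous ρ)
    {W₀ W : Submodule ℚ (ℚ ⊗[ℤ] M)}
    (h₀ : IsSimpleSub (extScalars ℚ ρ) W₀) (hW : IsSimpleSub (extScalars ℚ ρ) W) {g : G}
    (hg : ∀ x ∈ W₀, extScalars ℚ ρ g x = x) : ∀ x ∈ W, extScalars ℚ ρ g x = x := by
  obtain ⟨e, he⟩ := hρ W₀ W h₀ hW
  intro x hx
  obtain ⟨⟨y, hy⟩, hxy⟩ := e.surjective ⟨x, hx⟩
  have := he g y hy
  simp only [hg y hy, hxy] at this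
  exact this.symm

theorem invariants_extScalars_ne_bot_of_nontrivial_H2 {G M : Type} [Group G] [AddCommGroup M]
    [Module ℤ M] [Module.Flat ℤ M] (ρ : Representation ℤ G M) (N : Subgroup G) [N.Normal]
    [Finite N] [IsCyclic N] (hH2 : Nontrivial (groupCohomology.H2 (Rep.of (ρ.comp N.subtype)))) :
    Subrepresentation.invariants (extScalars ℚ ρ) N ≠ ⊥ := by
  obtain ⟨m, hm, hm0⟩ := Submodule.exists_mem_ne_zero_of_ne_bot fun h =>
    not_subsingleton _
      (groupCohomology.subsingleton_H2_of_invariants_eq_bot (Rep.of (ρ.comp N.subtype)) h)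
  rw [Rep.of_ρ] at hm
  intro hbot
  have h1m : (1 : ℚ) ⊗ₜ[ℤ] m ∈ Subrepresentation.invariants (extScalars ℚ ρ) N :=
    (Subrepresentation.mem_invariants _ N _).2 fun n =>
      (extScalars_tmul ρ n 1 m).trans (congrArg _ (hm n))
  rw [hbot] at h1m
  exact hm0 (one_tmul_injective M (by simpa using (Submodule.mem_bot ℚ).1 h1m))

theorem Homogeneous.invariants_eq_top {G M : Type*} [Group G] [Finite G] [AddCommGroup M]
    [Module ℤ M] {ρ : Representation ℤ G M} (hρ : Homogeneous ρ) (N : Subgroup G) [N.Normal]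
    (hN : Subrepresentation.invariants (extScalars ℚ ρ) N ≠ ⊥) :
    Subrepresentation.invariants (extScalars ℚ ρ) N = ⊤ := by
  obtain ⟨W₀, hW₀, hW₀N⟩ := (eq_bot_or_exists_atom_le _).resolve_left hN
  refine eq_top_of_forall_isAtom_le fun W hW x hx => (Subrepresentation.mem_invariants _ N x).2
    fun n => hρ.apply_eq_self_of_isSimpleSub (Subrepresentation.isSimpleSub_of_isAtom hW₀)
      (Subrepresentation.isSimpleSub_of_isAtom hW) (fun y hy => ?_) x hx
  exact (Subrepresentation.mem_invariants _ N y).1 (hW₀N hy) n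

theorem stmt_6_general {G M : Type} [Group G] [Finite G] [AddCommGroup M] [Module ℤ M]
    [Module.Free ℤ M] (ρ : Representation ℤ G M)
    (hhom : Homogeneous ρ) (C : Subgroup G) (hC : C.Normal) (hCcyc : IsCyclic C)
    (hH2 : Nontrivial (groupCohomology.H2 (Rep.of (ρ.comp C.subtype)))) :
    (∀ c ∈ C, ∀ x : ℚ ⊗[ℤ] M, extScalars ℚ ρ c x = x) ∧
      (Function.Injective ρ → C = ⊥) := by
  have htop :=
    hhom.invariants_eq_top C (invariants_extScalars_ne_bot_of_nontrivial_H2 ρ C hH2)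
  have htriv : ∀ c ∈ C, ∀ x, extScalars ℚ ρ c x = x := fun c hc x =>
    (Subrepresentation.mem_invariants _ C x).1 (htop.ge (Submodule.mem_top (R := ℚ))) ⟨c, hc⟩
  refine ⟨htriv, fun hinj => (Subgroup.eq_bot_iff_forall C).2 fun c hc => hinj ?_⟩
  rw [map_one]
  exact eq_one_of_extScalars_eq_one ρ (LinearMap.ext (htriv c hc))

/-- Let `G` be a finite group, `C` a cyclic normal subgroup, and `M` a
homogeneous `G`-lattice.  If `H²(C, M) ≠ 0`, then `C` acts trivially on `ℚ ⊗ M`;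
in particular, if `M` is a faithful `G`-module then `C` is trivial. -/
theorem stmt_6 {G M : Type} [Group G] [Finite G] [AddCommGroup M] [Module ℤ M]
    [Module.Free ℤ M] [Module.Finite ℤ M] (ρ : Representation ℤ G M)
    (hhom : Homogeneous ρ) (C : Subgroup G) (hC : C.Normal) (hCcyc : IsCyclic C)
    (hH2 : Nontrivial (groupCohomology.H2 (Rep.of (ρ.comp C.subtype)))) :
    (∀ c ∈ C, ∀ x : ℚ ⊗[ℤ] M, extScalars ℚ ρ c x = x) ∧
      (Function.Injective ρ → C = ⊥) :=
  stmt_6_general ρ hhom C hC hCcyc hH2
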